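/- Let k > 1 be an integer and let x be a real number such that M := M(x,k) satisfies M ≥ 3. Then log x < (k+1)·log(M+1) + k·log(2·log(M+1)). -/

import Mathlib

noncomputable section

/-- The j-th prime, with `nthPrime 1 = 2`, `nthPrime 2 = 3`, ... -/
def nthPrime (j : ℕ) : ℕ := Nat.nth Nat.Prime (j - 1)

/-- The chain sum `p_b^k + p_{b+1}^k + ... + p_t^k`. -/
def chainSum (k b t : ℕ) : ℕ := ∑ j ∈ Finset.Icc b t, nthPrime j ^ k

/-- `sk k x` is the total number of k-gleeful representations of integers ≤ x,
i.e. the number of pairs `1 ≤ b ≤ t` with `p_b^k + ... + p_t^k ≤ x`. -/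
def sk (k : ℕ) (x : ℝ) : ℕ :=
  Set.ncard {bt : ℕ × ℕ | 1 ≤ bt.1 ∧ bt.1 ≤ bt.2 ∧ (chainSum k bt.1 bt.2 : ℝ) ≤ x}

/-- `skm k m x` is the number of indices `n ≥ 1` with
`p_n^k + p_{n+1}^k + ... + p_{n+m-1}^k ≤ x`. -/
def skm (k m : ℕ) (x : ℝ) : ℕ :=
  Set.ncard {b : ℕ | 1 ≤ b ∧ (chainSum k b (b + m - 1) : ℝ) ≤ x}

/-- The prefix sum `p_1^k + ... + p_M^k`. -/
def prefixSum (k M : ℕ) : ℕ := ∑ j ∈ Finset.Icc 1 M, nthPrime j ^ k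

/-- The prime counting function: the number of primes ≤ t. -/
def primePi (t : ℝ) : ℕ := Set.ncard {p : ℕ | p.Prime ∧ (p : ℝ) ≤ t}

/-- `fkm k m n` is the number of indices `b ≥ 1` with
`n = p_b^k + p_{b+1}^k + ... + p_{b+m-1}^k`. -/
def fkm (k m n : ℕ) : ℕ :=
  Set.ncard {b : ℕ | 1 ≤ b ∧ n = chainSum k b (b + m - 1)}

def A (y : ℝ) : ℝ := Real.log (y / 2) / Real.log y

def B (y : ℝ) (k : ℕ) : ℝ :=
  Real.log (y + 1) / Real.log y +
    Real.log ((Real.log (y + 1)) ^ 2) / Real.log y * ((k : ℝ) / ((k : ℝ) + 1))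

def C (y : ℝ) (k : ℕ) : ℝ :=
  (y / (y - 1)) ^ ((1 : ℝ) / ((k : ℝ) + 1)) * B y k ^ ((k : ℝ) / ((k : ℝ) + 1))

def D (y : ℝ) (k : ℕ) : ℝ :=
  (y / (y + 3)) *
    (Real.log (y / 2) / (Real.log y + 2 * Real.log (Real.log (y + 2)))) ^
      ((k : ℝ) / ((k : ℝ) + 1))

def E (y : ℝ) (k : ℕ) : ℝ := 1 + 1 / (((k : ℝ) + 1) * A y - 1)

def F (y : ℝ) (k : ℕ) : ℝ :=
  ((y + 1) / y) ^ (((k : ℝ) - 1) / (k : ℝ)) *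
    (4 : ℝ) ^ (((k : ℝ) - 1) / ((k : ℝ) * ((k : ℝ) + 1))) *
    C y k ^ (((k : ℝ) - 1) / (k : ℝ)) * E y k

def U (y : ℝ) (k : ℕ) : ℝ := 1.25506 * F y k

def L (y : ℝ) (k : ℕ) : ℝ := ((y - 1) / y) * D y k ^ 2

def ck (k : ℕ) : ℝ :=
  ((k : ℝ) ^ 2 / ((k : ℝ) - 1)) * ((k : ℝ) + 1) ^ (((k : ℝ) - 1) / (k : ℝ))

/-!
Since `p₁ᵏ + ⋯ + p_{M+1}ᵏ ≤ (M + 1) p_{M+1}ᵏ`, it suffices that `p_N ≤ 2 N log N` for `N ≥ 4`.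
For `N > 1024` this follows from Chebyshev's bound `π(y) ≥ ((y - 1) log 2 - log (y + 2)) / log y`
at `y = 2 N log N`. For smaller `N`, `3 p_N ≤ 4 N ⌊log₂ N⌋` is verified by computation, and
`4 / 3 ≤ 2 log 2`.
-/

open Real

def noDivisorFrom (n : ℕ) : ℕ → ℕ → Bool
  | 0, d => n < d * d
  | fuel + 1, d => n < d * d || (n % d != 0 && noDivisorFrom n fuel (d + 1))

theorem noDivisorFrom_iff {n : ℕ} :
    ∀ {fuel d : ℕ}, n < (d + fuel) * (d + fuel) →
      (noDivisorFrom n fuel d = true ↔ ∀ m, d ≤ m → m * m ≤ n → ¬m ∣ n) := by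
  intro fuel
  induction fuel with
  | zero =>
    intro d hd
    simp only [noDivisorFrom, add_zero] at hd ⊢
    refine ⟨fun _ m hdm hmn => absurd (Nat.mul_le_mul hdm hdm) (by omega), fun _ => by simpa⟩
  | succ fuel ih =>
    intro d hd
    have hd' : n < (d + 1 + fuel) * (d + 1 + fuel) := by rwa [add_right_comm, add_assoc]
    simp only [noDivisorFrom, Bool.or_eq_true, Bool.and_eq_true, decide_eq_true_eq, bne_iff_ne,
      ne_eq, ← Nat.dvd_iff_mod_eq_zero, ih hd']
    by_cases hsmall : n < d * d
    · simp only [hsmall, true_or, true_iff]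
      exact fun m hdm hmn => absurd (Nat.mul_le_mul hdm hdm) (by omega)
    · simp only [hsmall, false_or]
      constructor
      · rintro ⟨hd, hrest⟩ m hdm hmn
        rcases hdm.eq_or_lt with rfl | hlt
        · exact hd
        · exact hrest m hlt hmn
      · intro h
        exact ⟨h d le_rfl (by omega), fun m hm => h m (Nat.le_of_succ_le hm)⟩

/-- Unlike `Nat.decidablePrime`, which tries every `m < n`, this is fast enough for the kernel. -/
def isPrimeByTrialDivision (n : ℕ) : Bool := 2 ≤ n && noDivisorFrom n n 2

theorem isPrimeByTrialDivision_iff {n : ℕ} : isPrimeByTrialDivision n = true ↔ n.Prime := by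
  rw [isPrimeByTrialDivision, Bool.and_eq_true, decide_eq_true_eq,
    noDivisorFrom_iff (by nlinarith), Nat.prime_def_le_sqrt]
  simp only [Nat.le_sqrt]

/-- Scans `n, n + 1, …` keeping `c = Nat.count Nat.Prime n`, and checks `P c p` at each prime `p`
until `J` primes have been seen. -/
def scanPrimes (P : ℕ → ℕ → Bool) (J : ℕ) : ℕ → ℕ → ℕ → Bool
  | 0, _, c => J ≤ c
  | fuel + 1, n, c =>
    J ≤ c ||
      if isPrimeByTrialDivision n then P c n && scanPrimes P J fuel (n + 1) (c + 1)
      else scanPrimes P J fuel (n + 1) c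

theorem scanPrimes_sound {P : ℕ → ℕ → Bool} {J : ℕ} :
    ∀ {fuel n : ℕ}, scanPrimes P J fuel n (Nat.count Nat.Prime n) = true →
      ∀ j, Nat.count Nat.Prime n ≤ j → j < J → P j (Nat.nth Nat.Prime j) = true := by
  intro fuel
  induction fuel with
  | zero =>
    intro n h j hj hjJ
    simp only [scanPrimes, decide_eq_true_eq] at h
    omega
  | succ fuel ih =>
    intro n h j hj hjJ
    have hlt : ¬J ≤ Nat.count Nat.Prime n := by omega
    simp only [scanPrimes, hlt, decide_false, Bool.false_or] at h
    by_cases hp : n.Prime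
    · rw [if_pos (isPrimeByTrialDivision_iff.mpr hp), Bool.and_eq_true] at h
      rcases hj.eq_or_lt with rfl | hj
      · rw [Nat.nth_count hp]
        exact h.1
      · exact ih (by rw [Nat.count_succ_eq_succ_count_iff.mpr hp]; exact h.2) j
          (by rw [Nat.count_succ_eq_succ_count_iff.mpr hp]; omega) hjJ
    · rw [if_neg (mt isPrimeByTrialDivision_iff.mp hp)] at h
      exact ih (by rwa [Nat.count_succ_eq_count_iff.mpr hp]) j
        (by rwa [Nat.count_succ_eq_count_iff.mpr hp]) hjJ

theorem three_mul_nth_prime_le {j : ℕ} (h3 : 3 ≤ j) (hj : j < 1024) :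
    3 * Nat.nth Nat.Prime j ≤ 4 * (j + 1) * Nat.log2 (j + 1) := by
  have hcount : Nat.count Nat.Prime 7 = 3 := by decide
  -- `p₁₀₂₄ = 8161`, so `8200` steps from `7` reach the `1024`-th prime.
  have hscan : scanPrimes (fun j p => 3 * p ≤ 4 * (j + 1) * Nat.log2 (j + 1)) 1024 8200 7
      (Nat.count Nat.Prime 7) = true := by
    rw [hcount]
    decide +kernel
  simpa using scanPrimes_sound hscan j (hcount ▸ h3) hj

theorem nthPrime_le_two_mul_mul_log_of_le {N : ℕ} (h4 : 4 ≤ N) (hN : N ≤ 1024) :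
    (nthPrime N : ℝ) ≤ 2 * N * log N := by
  obtain ⟨j, rfl⟩ : ∃ j, N = j + 1 := ⟨N - 1, by omega⟩
  have hbound : 3 * (Nat.nth Nat.Prime j : ℝ) ≤ 4 * (j + 1) * (Nat.log2 (j + 1) : ℝ) := by
    exact_mod_cast three_mul_nth_prime_le (by omega) (by omega)
  have hlog2 : (Nat.log2 (j + 1) : ℝ) * log 2 ≤ log (j + 1) := by
    have h := Real.log2_le_logb (j + 1)
    rwa [Real.logb, le_div_iff₀ (log_pos one_lt_two), Nat.cast_add_one] at h
  have hlog2_gt : 2 / 3 < log 2 := by linarith [log_two_gt_d9]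
  have hj : (0 : ℝ) ≤ j + 1 := by positivity
  simp only [nthPrime, add_tsub_cancel_right, Nat.cast_add_one]
  nlinarith [mul_nonneg (mul_nonneg hj (Nat.cast_nonneg (Nat.log2 (j + 1))))
      (sub_nonneg.2 hlog2_gt.le), mul_le_mul_of_nonneg_left hlog2 hj]

theorem log_le_div_eight_add {t : ℝ} (ht : 0 < t) : log t ≤ t / 8 + 3 * log 2 - 1 := by
  have h8 : log t = 3 * log 2 + log (t / 8) := by
    rw [← Nat.cast_ofNat (n := 3), ← log_pow, ← log_mul (by norm_num) (by positivity)]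
    ring_nf
  linarith [log_le_sub_one_of_pos (show 0 < t / 8 by positivity)]

theorem add_one_mul_log_le_mul_log_two {N : ℝ} (hN : 1024 ≤ N) :
    (N + 1) * log (2 * N * log N) + log 2 ≤ (2 * N * log N - 1) * log 2 := by
  have hl := log_two_gt_d9
  have hu := log_two_lt_d9
  have ht : 10 * log 2 ≤ log N := by
    rw [← Nat.cast_ofNat (n := 10), ← log_pow]
    exact log_le_log (by norm_num) (by norm_num; linarith)
  have ht0 : 0 < log N := by linarith
  have hsplit : log (2 * N * log N) = log 2 + log N + log (log N) := by
    rw [log_mul (by positivity) ht0.ne', log_mul two_ne_zero (by positivity)]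
  have hloglog := log_le_div_eight_add ht0
  rw [hsplit]
  nlinarith [mul_nonneg (sub_nonneg.2 hl.le) (mul_nonneg (by linarith : (0 : ℝ) ≤ N) ht0.le),
    mul_nonneg (sub_nonneg.2 hu.le) (by linarith : (0 : ℝ) ≤ N),
    mul_nonneg (by linarith : (0 : ℝ) ≤ N - 1024)
      (by linarith : (0 : ℝ) ≤ 0.2612 * log N - 1.7728)]

theorem nthPrime_le_of_le_primeCounting {N m : ℕ} (hN : 1 ≤ N) (h : N ≤ Nat.primeCounting m) :
    nthPrime N ≤ m :=
  Nat.lt_add_one_iff.mp <| Nat.nth_lt_of_lt_count <| by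
    simp only [Nat.primeCounting, Nat.primeCounting'] at h
    omega

theorem nthPrime_le_two_mul_mul_log_of_ge {N : ℕ} (hN : 1024 ≤ N) :
    (nthPrime N : ℝ) ≤ 2 * N * log N := by
  have hN' : (1024 : ℝ) ≤ N := by exact_mod_cast hN
  set y : ℝ := 2 * N * log N
  have hlogN : 1 ≤ log N := by
    rw [← log_exp 1]
    exact log_le_log (exp_pos 1) (by linarith [exp_one_lt_d9])
  have hy2 : 2 ≤ y := by nlinarith
  have hlogy : 0 < log y := log_pos (by linarith)
  have hcount : (N : ℝ) ≤ Nat.primeCounting ⌊y⌋₊ := by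
    refine le_trans ?_ (Chebyshev.pi_ge' (by linarith))
    rw [le_div_iff₀ hlogy]
    have hy2' : log (y + 2) ≤ log 2 + log y := by
      rw [← log_mul two_ne_zero (by positivity)]
      exact log_le_log (by positivity) (by linarith)
    linarith [add_one_mul_log_le_mul_log_two hN']
  calc (nthPrime N : ℝ) ≤ ⌊y⌋₊ := by
        exact_mod_cast nthPrime_le_of_le_primeCounting (by omega) (by exact_mod_cast hcount)
    _ ≤ y := Nat.floor_le (by positivity)

theorem nthPrime_le_two_mul_mul_log {N : ℕ} (hN : 4 ≤ N) :
    (nthPrime N : ℝ) ≤ 2 * N * log N := by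
  rcases le_total N 1024 with hsmall | hlarge
  · exact nthPrime_le_two_mul_mul_log_of_le hN hsmall
  · exact nthPrime_le_two_mul_mul_log_of_ge hlarge

theorem nthPrime_pos (j : ℕ) : 0 < nthPrime j := (Nat.prime_nth_prime _).pos

theorem nthPrime_mono : Monotone nthPrime :=
  (Nat.nth_strictMono Nat.infinite_setOfPred_prime).monotone.comp
    fun _ _ h => Nat.sub_le_sub_right h 1

theorem prefixSum_le_mul_pow (k N : ℕ) : prefixSum k N ≤ N * nthPrime N ^ k := by
  calc prefixSum k N ≤ (Finset.Icc 1 N).card • nthPrime N ^ k :=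
        Finset.sum_le_card_nsmul _ _ _ fun j hj =>
          Nat.pow_le_pow_left (nthPrime_mono (Finset.mem_Icc.mp hj).2) k
    _ = N * nthPrime N ^ k := by simp

theorem prefixSum_pos (k : ℕ) {M : ℕ} (hM : 1 ≤ M) : 0 < prefixSum k M :=
  Finset.sum_pos (fun j _ => pow_pos (nthPrime_pos j) k) (Finset.nonempty_Icc.mpr hM)

theorem logx_upper_in_M_general (k : ℕ) (x : ℝ) (M : ℕ)
    (hM1 : (prefixSum k M : ℝ) ≤ x) (hM2 : x < (prefixSum k (M + 1) : ℝ))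
    (hM : 3 ≤ M) :
    Real.log x <
      ((k : ℝ) + 1) * Real.log ((M : ℝ) + 1) +
        (k : ℝ) * Real.log (2 * Real.log ((M : ℝ) + 1)) := by
  have hx : 0 < x := lt_of_lt_of_le (by exact_mod_cast prefixSum_pos k (by omega)) hM1
  have hN : (4 : ℝ) ≤ M + 1 := by exact_mod_cast Nat.succ_le_succ hM
  have hlogN : 0 < log ((M : ℝ) + 1) := log_pos (by linarith)
  have hp : (nthPrime (M + 1) : ℝ) ≤ 2 * (M + 1) * log (M + 1) := by
    exact_mod_cast nthPrime_le_two_mul_mul_log (N := M + 1) (by omega)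
  have hp0 : (0 : ℝ) < nthPrime (M + 1) := by exact_mod_cast nthPrime_pos _
  have hsum : x < (M + 1) * (nthPrime (M + 1) : ℝ) ^ k :=
    hM2.trans_le (by exact_mod_cast prefixSum_le_mul_pow k (M + 1))
  calc log x < log ((M + 1) * (nthPrime (M + 1) : ℝ) ^ k) := log_lt_log hx hsum
    _ = log (M + 1) + k * log (nthPrime (M + 1)) := by
        rw [log_mul (by positivity) (by positivity), log_pow]
    _ ≤ log (M + 1) + k * log (2 * (M + 1) * log (M + 1)) := by
        gcongr
    _ = (k + 1) * log (M + 1) + k * log (2 * log (M + 1)) := by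
        rw [mul_right_comm, log_mul (by positivity) (by positivity)]
        ring

theorem logx_upper_in_M (k : ℕ) (hk : 1 < k) (x : ℝ) (M : ℕ)
    (hM1 : (prefixSum k M : ℝ) ≤ x) (hM2 : x < (prefixSum k (M + 1) : ℝ))
    (hM : 3 ≤ M) :
    Real.log x <
      ((k : ℝ) + 1) * Real.log ((M : ℝ) + 1) +
        (k : ℝ) * Real.log (2 * Real.log ((M : ℝ) + 1)) :=
  logx_upper_in_M_general k x M hM1 hM2 hM
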